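/- arXiv:2006.16288 — 3 statements merged into one kernel-verified Lean document; each statement's English description precedes it below -/
import Mathlib

section
/- Let 𝔞 be a finite-dimensional real inner product space carrying a reduced root system Φ with a fixed system of simple roots Δ = {α_1, …, α_n} and Weyl group W. Fix an index i, let λ ∈ 𝔞 and w ∈ W, and suppose that ν := A_w λ satisfies ⟨α_i, ν⟩ = 0 and ⟨α_j, ν⟩ > 0 for all j ≠ i (so ν is dominant and lies on exactly the wall H_{α_i}). Then w ∈ {1, s_i}, and consequently ν = A_{s_i}λ = λ − (⟨α_i, λ⟩/2)·α_i^∨, the orthogonal projection of λ onto the hyperplane H_{α_i}. -/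
/-!
`ν = A_w λ` is fixed by `w`. The stabilizer in `W` of a dominant vector is generated by the
simple reflections fixing it: write `w = w₀ s_j` as a word; if `w₀ α_j < 0` the exchange condition
shortens the word, and otherwise `w α_j < 0` gives `⟨α_j, ν⟩ = ⟨w α_j, ν⟩ ≤ 0`, so `s_j` fixes
`ν` and we induct on `w₀`. As `s_i` is the only simple reflection fixing `ν`, `w ∈ {1, s_i}`,
and `A_{s_i} λ = (λ + s_i λ) / 2`.
-/

open scoped RealInnerProductSpace

namespace ADLV

variable {V : Type*} [NormedAddCommGroup V] [InnerProductSpace ℝ V]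

/-- The coroot `α^∨ = 2α/(α,α)` of a root `α`. -/
noncomputable def coroot (α : V) : V := (2 / ⟪α, α⟫) • α

/-- The reflection `s_α : x ↦ x - ⟨α, x⟩ α^∨` in the hyperplane orthogonal to `α`,
as a linear automorphism. -/
noncomputable def sRefl (α : V) (hα : α ≠ 0) : V ≃ₗ[ℝ] V :=
  Module.reflection (f := (innerSL ℝ α : V →ₗ[ℝ] ℝ)) (x := coroot α)
    (by
      have h : ⟪α, α⟫ ≠ 0 := inner_self_ne_zero.mpr hα
      simp [coroot, real_inner_smul_right]
      field_simp)

/-- The averaging operator `A_w = (1/m)(I + w + w² + ⋯ + w^{m-1})`. -/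
noncomputable def avgProj (m : ℕ) (w : V ≃ₗ[ℝ] V) : V →ₗ[ℝ] V :=
  (m : ℝ)⁻¹ • ∑ i ∈ Finset.range m, ((w ^ i : V ≃ₗ[ℝ] V) : V →ₗ[ℝ] V)

/-- The Weyl group: the group generated by the simple reflections `s_1, …, s_n`. -/
noncomputable def weylGroup {n : ℕ} (α : Fin n → V) (hα : ∀ j, α j ≠ 0) :
    Subgroup (V ≃ₗ[ℝ] V) :=
  Subgroup.closure (Set.range fun j => sRefl (α j) (hα j))

lemma sRefl_apply (α : V) (hα : α ≠ 0) (x : V) :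
    sRefl α hα x = x - ⟪α, x⟫ • coroot α :=
  Module.reflection_apply x _

lemma sRefl_apply_self (α : V) (hα : α ≠ 0) : sRefl α hα α = -α := by
  have h : ⟪α, α⟫ ≠ 0 := inner_self_ne_zero.mpr hα
  rw [sRefl_apply, coroot, smul_smul, mul_div_cancel₀ _ h]
  module

lemma sRefl_mul_self (α : V) (hα : α ≠ 0) : sRefl α hα * sRefl α hα = 1 :=
  LinearEquiv.ext (Module.involutive_reflection _)

lemma sRefl_inv (α : V) (hα : α ≠ 0) : (sRefl α hα)⁻¹ = sRefl α hα :=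
  Module.reflection_inv _

lemma sRefl_ne_one (α : V) (hα : α ≠ 0) : sRefl α hα ≠ 1 := by
  intro h
  have h2 : (2 : ℝ) • α = 0 := by
    have := sRefl_apply_self α hα
    rw [h, LinearEquiv.coe_one, id_eq, eq_neg_iff_add_eq_zero] at this
    rwa [two_smul]
  exact hα ((smul_eq_zero.mp h2).resolve_left two_ne_zero)

lemma orderOf_sRefl (α : V) (hα : α ≠ 0) : orderOf (sRefl α hα) = 2 :=
  orderOf_eq_prime (by rw [sq, sRefl_mul_self]) (sRefl_ne_one α hα)

lemma inner_sRefl_sRefl (α : V) (hα : α ≠ 0) (x y : V) :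
    ⟪sRefl α hα x, sRefl α hα y⟫ = ⟪x, y⟫ := by
  have h : ⟪α, α⟫ ≠ 0 := inner_self_ne_zero.mpr hα
  simp only [sRefl_apply, coroot, inner_sub_left, inner_sub_right, real_inner_smul_left,
    real_inner_smul_right, real_inner_comm x α]
  field_simp
  ring

lemma sRefl_mul_eq_mul_sRefl {u : V ≃ₗ[ℝ] V} (hu : ∀ x y, ⟪u x, u y⟫ = ⟪x, y⟫)
    {β γ : V} (hβ : β ≠ 0) (hγ : γ ≠ 0) (huβ : u β = γ) :
    sRefl γ hγ * u = u * sRefl β hβ := by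
  subst huβ
  ext x
  simp only [LinearEquiv.mul_apply, sRefl_apply, coroot, map_sub, map_smul, hu]

variable {n : ℕ}

def IsPositive (α : Fin n → V) (β : V) : Prop :=
  ∃ c : Fin n → ℝ, (∀ j, 0 ≤ c j) ∧ β = ∑ j, c j • α j

lemma isPositive_simple (α : Fin n → V) (j : Fin n) : IsPositive α (α j) :=
  ⟨Pi.single j 1, fun l => by by_cases h : l = j <;> simp [h],
    by simp [Pi.single_apply, ite_smul]⟩

lemma IsPositive.inner_nonneg {α : Fin n → V} {β ν : V} (hβ : IsPositive α β)
    (hν : ∀ j, 0 ≤ ⟪α j, ν⟫) : 0 ≤ ⟪β, ν⟫ := by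
  obtain ⟨c, hc, rfl⟩ := hβ
  rw [sum_inner]
  exact Finset.sum_nonneg fun j _ => by
    rw [real_inner_smul_left]; exact mul_nonneg (hc j) (hν j)

lemma IsPositive.eq_zero_of_neg {α : Fin n → V} (hlin : LinearIndependent ℝ α) {β : V}
    (hβ : IsPositive α β) (hnβ : IsPositive α (-β)) : β = 0 := by
  obtain ⟨c, hc, rfl⟩ := hβ
  obtain ⟨d, hd, hde⟩ := hnβ
  have hsum : ∑ j, (c j + d j) • α j = 0 := by
    simp only [add_smul, Finset.sum_add_distrib, ← hde, add_neg_cancel]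
  have hcd := Fintype.linearIndependent_iff.mp hlin _ hsum
  have hc0 : ∀ j, c j = 0 := fun j => by linarith [hcd j, hc j, hd j]
  simp [hc0]

structure IsSimpleSystem (Φ : Set V) (α : Fin n → V) : Prop where
  mem : ∀ j, α j ∈ Φ
  linearIndependent : LinearIndependent ℝ α
  sub_smul_coroot_mem : ∀ β ∈ Φ, ∀ γ ∈ Φ, γ - ⟪β, γ⟫ • coroot β ∈ Φ
  reduced : ∀ β ∈ Φ, ∀ r : ℝ, r • β ∈ Φ → r = 1 ∨ r = -1
  sign_coherent : ∀ β ∈ Φ, ∃ c : Fin n → ℤ, ((∀ j, 0 ≤ c j) ∨ (∀ j, c j ≤ 0)) ∧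
    β = ∑ j, (c j : ℝ) • α j

namespace IsSimpleSystem

variable {Φ : Set V} {α : Fin n → V} (hS : IsSimpleSystem Φ α) (hα : ∀ j, α j ≠ 0)
include hS

lemma zero_notMem : (0 : V) ∉ Φ := by
  intro h0
  have h := hS.reduced 0 h0 0 (by rwa [smul_zero])
  norm_num at h

lemma isPositive_or_isPositive_neg {β : V} (hβ : β ∈ Φ) :
    IsPositive α β ∨ IsPositive α (-β) := by
  obtain ⟨c, hc | hc, rfl⟩ := hS.sign_coherent β hβ
  · exact Or.inl ⟨fun j => c j, fun j => Int.cast_nonneg_iff.mpr (hc j), rfl⟩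
  · refine Or.inr ⟨fun j => -(c j : ℝ), fun j => by simpa using hc j, ?_⟩
    simp [neg_smul, Finset.sum_neg_distrib]

lemma sRefl_mem (j : Fin n) {β : V} (hβ : β ∈ Φ) : sRefl (α j) (hα j) β ∈ Φ := by
  rw [sRefl_apply]
  exact hS.sub_smul_coroot_mem _ (hS.mem j) β hβ

lemma isPositive_sRefl (j : Fin n) {β : V} (hβ : β ∈ Φ) (hpos : IsPositive α β)
    (hne : β ≠ α j) : IsPositive α (sRefl (α j) (hα j) β) := by
  refine (hS.isPositive_or_isPositive_neg (hS.sRefl_mem hα j hβ)).resolve_right ?_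
  rintro ⟨d, hd, hde⟩
  obtain ⟨c, hc, rfl⟩ := hpos
  set r := ⟪α j, ∑ l, c l • α l⟫ * (2 / ⟪α j, α j⟫)
  -- `s_j β = β - r α_j` keeps the coordinates off `j`, so a negative `s_j β` forces `β ∈ ℝ α_j`
  have hsum : ∑ l, (c l - (Pi.single j r : Fin n → ℝ) l + d l) • α l = 0 := by
    simp only [add_smul, sub_smul, Finset.sum_add_distrib, Finset.sum_sub_distrib, ← hde,
      Pi.single_apply, ite_smul, zero_smul, Finset.sum_ite_eq', Finset.mem_univ, if_true]
    rw [sRefl_apply, coroot, smul_smul]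
    abel
  have hcd := Fintype.linearIndependent_iff.mp hS.linearIndependent _ hsum
  have hc0 : ∀ l, l ≠ j → c l = 0 := fun l hl => by
    have := hcd l
    rw [Pi.single_eq_of_ne hl] at this
    linarith [hc l, hd l]
  have hβj : ∑ l, c l • α l = c j • α j :=
    Finset.sum_eq_single j (fun l _ hl => by rw [hc0 l hl, zero_smul]) (by simp)
  rw [hβj] at hβ hne
  rcases hS.reduced _ (hS.mem j) (c j) hβ with h | h
  · exact hne (by rw [h, one_smul])
  · linarith [hc j]

end IsSimpleSystem

noncomputable def reflProd (α : Fin n → V) (hα : ∀ j, α j ≠ 0) (L : List (Fin n)) :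
    V ≃ₗ[ℝ] V :=
  (L.map fun j => sRefl (α j) (hα j)).prod

section Words

variable {α : Fin n → V} {hα : ∀ j, α j ≠ 0}

@[simp] lemma reflProd_nil : reflProd α hα [] = 1 := rfl

@[simp] lemma reflProd_cons (j : Fin n) (L : List (Fin n)) :
    reflProd α hα (j :: L) = sRefl (α j) (hα j) * reflProd α hα L := by
  simp [reflProd]

@[simp] lemma reflProd_append (L₁ L₂ : List (Fin n)) :
    reflProd α hα (L₁ ++ L₂) = reflProd α hα L₁ * reflProd α hα L₂ := by
  simp [reflProd]

lemma inner_reflProd_reflProd (L : List (Fin n)) (x y : V) :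
    ⟪reflProd α hα L x, reflProd α hα L y⟫ = ⟪x, y⟫ := by
  induction L generalizing x y with
  | nil => rfl
  | cons j L ih => rw [reflProd_cons, LinearEquiv.mul_apply, LinearEquiv.mul_apply,
      inner_sRefl_sRefl, ih]

lemma exists_reflProd_eq_of_mem_weylGroup {w : V ≃ₗ[ℝ] V} (hw : w ∈ weylGroup α hα) :
    ∃ L, reflProd α hα L = w := by
  induction hw using Subgroup.closure_induction_left with
  | one => exact ⟨[], rfl⟩
  | mul_left _ hs _ _ ih =>
    obtain ⟨j, rfl⟩ := hs
    obtain ⟨L, rfl⟩ := ih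
    exact ⟨j :: L, reflProd_cons j L⟩
  | inv_mul_cancel _ hs _ _ ih =>
    obtain ⟨j, rfl⟩ := hs
    obtain ⟨L, rfl⟩ := ih
    exact ⟨j :: L, by rw [reflProd_cons, sRefl_inv]⟩

lemma IsSimpleSystem.reflProd_mem {Φ : Set V} (hS : IsSimpleSystem Φ α) (L : List (Fin n))
    {β : V} (hβ : β ∈ Φ) : reflProd α hα L β ∈ Φ := by
  induction L with
  | nil => exact hβ
  | cons j L ih => exact hS.sRefl_mem hα j ih

/-- The exchange condition. -/
lemma IsSimpleSystem.exists_reflProd_mul_sRefl {Φ : Set V} (hS : IsSimpleSystem Φ α)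
    (L : List (Fin n)) (j : Fin n) (hneg : IsPositive α (-(reflProd α hα L (α j)))) :
    ∃ L', L'.length < L.length ∧ reflProd α hα L * sRefl (α j) (hα j) = reflProd α hα L' := by
  induction L with
  | nil => exact absurd ((isPositive_simple α j).eq_zero_of_neg hS.linearIndependent hneg) (hα j)
  | cons j₁ T ih =>
    by_cases hT : IsPositive α (-(reflProd α hα T (α j)))
    · obtain ⟨T', hlen, hT'⟩ := ih hT
      exact ⟨j₁ :: T', by simpa using hlen, by rw [reflProd_cons, reflProd_cons, mul_assoc, hT']⟩
    · have hmem := hS.reflProd_mem (hα := hα) T (hS.mem j)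
      have hpos := (hS.isPositive_or_isPositive_neg hmem).resolve_right hT
      -- `s_{j₁}` flips the sign of the positive root `T α_j`, so it must be `α_{j₁}`
      have heq : reflProd α hα T (α j) = α j₁ := by
        by_contra hne
        rw [reflProd_cons, LinearEquiv.mul_apply] at hneg
        have h0 := (hS.isPositive_sRefl hα j₁ hmem hpos hne).eq_zero_of_neg
          hS.linearIndependent hneg
        exact hS.zero_notMem (h0 ▸ hS.sRefl_mem hα j₁ hmem)
      have hconj := sRefl_mul_eq_mul_sRefl (inner_reflProd_reflProd T) (hα j) (hα j₁) heq
      refine ⟨T, by simp, ?_⟩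
      rw [reflProd_cons, mul_assoc, ← hconj, ← mul_assoc, sRefl_mul_self, one_mul]

lemma IsSimpleSystem.reflProd_mem_closure_of_apply_eq_self {Φ : Set V}
    (hS : IsSimpleSystem Φ α) {ν : V} (hdom : ∀ j, 0 ≤ ⟪α j, ν⟫) (L : List (Fin n))
    (hfix : reflProd α hα L ν = ν) :
    reflProd α hα L ∈
      Subgroup.closure ((fun j => sRefl (α j) (hα j)) '' {j | ⟪α j, ν⟫ = 0}) := by
  induction hL : L.length using Nat.strong_induction_on generalizing L with
  | _ k ih =>
  subst hL
  rcases List.eq_nil_or_concat' L with rfl | ⟨L₀, j, rfl⟩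
  · exact one_mem _
  have hlen : L₀.length < (L₀ ++ [j]).length := by simp
  by_cases hneg : IsPositive α (-(reflProd α hα L₀ (α j)))
  · obtain ⟨L', hlen', hL'⟩ := hS.exists_reflProd_mul_sRefl L₀ j hneg
    rw [reflProd_append, reflProd_cons, reflProd_nil, mul_one, hL'] at hfix ⊢
    exact ih _ (hlen'.trans hlen) L' hfix rfl
  have hpos := (hS.isPositive_or_isPositive_neg (hS.reflProd_mem L₀ (hS.mem j))).resolve_right
    hneg
  -- `w α_j = -(L₀ α_j)` is negative while `ν = w ν` is dominant
  have hwall : ⟪α j, ν⟫ = 0 := by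
    have h : ⟪α j, ν⟫ = -⟪reflProd α hα L₀ (α j), ν⟫ := calc
      ⟪α j, ν⟫ = ⟪reflProd α hα (L₀ ++ [j]) (α j), reflProd α hα (L₀ ++ [j]) ν⟫ :=
        (inner_reflProd_reflProd _ _ _).symm
      _ = -⟪reflProd α hα L₀ (α j), ν⟫ := by
        rw [hfix]; simp [sRefl_apply_self, inner_neg_left]
    linarith [hdom j, hpos.inner_nonneg hdom]
  have hsν : sRefl (α j) (hα j) ν = ν := by simp [sRefl_apply, hwall]
  rw [reflProd_append, reflProd_cons, reflProd_nil, mul_one] at hfix ⊢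
  rw [LinearEquiv.mul_apply, hsν] at hfix
  exact mul_mem (ih _ hlen L₀ hfix rfl) (Subgroup.subset_closure ⟨j, hwall, rfl⟩)

end Words

lemma eq_one_or_eq_of_mem_closure_singleton {G : Type*} [Group G] {s g : G} (hs : s * s = 1)
    (hg : g ∈ Subgroup.closure {s}) : g = 1 ∨ g = s := by
  obtain ⟨k, rfl⟩ := Subgroup.mem_closure_singleton.mp hg
  obtain ⟨k, rfl | rfl⟩ := Int.even_or_odd' k
  · exact Or.inl (by rw [zpow_mul, zpow_two, hs, one_zpow])
  · exact Or.inr (by rw [zpow_add_one, zpow_mul, zpow_two, hs, one_zpow, one_mul])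

lemma avgProj_apply (m : ℕ) (w : V ≃ₗ[ℝ] V) (x : V) :
    avgProj m w x = (m : ℝ)⁻¹ • ∑ k ∈ Finset.range m, (w ^ k) x := by
  simp [avgProj, LinearMap.sum_apply]

lemma avgProj_two_apply (s : V ≃ₗ[ℝ] V) (x : V) : avgProj 2 s x = (2 : ℝ)⁻¹ • (x + s x) := by
  simp [avgProj_apply, Finset.sum_range_succ]

lemma apply_avgProj_orderOf (w : V ≃ₗ[ℝ] V) (x : V) :
    w (avgProj (orderOf w) w x) = avgProj (orderOf w) w x := by
  rw [avgProj_apply, map_smul, map_sum]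
  congr 1
  -- shifting the orbit sum by one step of `w` permutes it cyclically, as `w ^ orderOf w = 1`
  have hshift := (Finset.sum_range_succ' (fun k => (w ^ k) x) (orderOf w)).symm.trans
    (Finset.sum_range_succ (fun k => (w ^ k) x) (orderOf w))
  rw [pow_zero, pow_orderOf_eq_one] at hshift
  simpa only [pow_succ', LinearEquiv.mul_apply] using add_right_cancel hshift

theorem newton_point_rank_one_general
    {n : ℕ}
    (Φ : Finset V) (α : Fin n → V) (hα : ∀ j, α j ≠ 0)
    (hαΦ : ∀ j, α j ∈ Φ)
    (hlin : LinearIndependent ℝ α)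
    -- `Φ` is stable under the reflection in each of its members
    (hrefl : ∀ β ∈ Φ, ∀ γ ∈ Φ, γ - ⟪β, γ⟫ • coroot β ∈ Φ)
    -- `Φ` is reduced
    (hred : ∀ β ∈ Φ, ∀ r : ℝ, r • β ∈ Φ → r = 1 ∨ r = -1)
    -- `α` is a system of simple roots: every root is an integral linear combination of
    -- the simple roots with coefficients all of the same sign
    (hsimp : ∀ β ∈ Φ, ∃ c : Fin n → ℤ, ((∀ j, 0 ≤ c j) ∨ (∀ j, c j ≤ 0)) ∧
        β = ∑ j, (c j : ℝ) • α j)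
    (i : Fin n) (lam : V) (w : V ≃ₗ[ℝ] V) (hwW : w ∈ weylGroup α hα)
    (m : ℕ) (hord : orderOf w = m)
    (hν_wall : ⟪α i, avgProj m w lam⟫ = 0)
    (hν_pos : ∀ j, j ≠ i → 0 < ⟪α j, avgProj m w lam⟫) :
    (w = 1 ∨ w = sRefl (α i) (hα i)) ∧
    avgProj m w lam = avgProj 2 (sRefl (α i) (hα i)) lam ∧
    avgProj m w lam = lam - (⟪α i, lam⟫ / 2) • coroot (α i) := by
  have hS : IsSimpleSystem (Φ : Set V) α := ⟨hαΦ, hlin, hrefl, hred, hsimp⟩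
  subst hord
  have hwalls : {j | ⟪α j, avgProj (orderOf w) w lam⟫ = 0} = {i} := by
    ext j
    refine ⟨fun hj => by_contra fun hji => (hν_pos j hji).ne' hj, fun hj => ?_⟩
    rwa [Set.mem_singleton_iff.mp hj]
  have hw : w = 1 ∨ w = sRefl (α i) (hα i) := by
    obtain ⟨L, rfl⟩ := exists_reflProd_eq_of_mem_weylGroup hwW
    have hdom j : 0 ≤ ⟪α j, avgProj (orderOf (reflProd α hα L)) (reflProd α hα L) lam⟫ := by
      rcases eq_or_ne j i with rfl | hji
      exacts [hν_wall.ge, (hν_pos j hji).le]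
    have hmem := hS.reflProd_mem_closure_of_apply_eq_self hdom L (apply_avgProj_orderOf _ lam)
    rw [hwalls, Set.image_singleton] at hmem
    exact eq_one_or_eq_of_mem_closure_singleton (sRefl_mul_self _ _) hmem
  have hproj : avgProj 2 (sRefl (α i) (hα i)) lam = lam - (⟪α i, lam⟫ / 2) • coroot (α i) := by
    rw [avgProj_two_apply, sRefl_apply]
    module
  refine ⟨hw, ?_⟩
  rcases hw with rfl | rfl
  · have hlam : avgProj (orderOf (1 : V ≃ₗ[ℝ] V)) 1 lam = lam := by simp [avgProj]
    rw [hlam] at hν_wall ⊢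
    simp [hproj, hν_wall]
  · rw [orderOf_sRefl]
    exact ⟨rfl, hproj⟩

/-- Let `Φ` be a reduced crystallographic root system in a
finite-dimensional real inner product space `𝔞`, with simple roots `α_1, …, α_n` and
Weyl group `W`.  Fix an index `i`, let `λ ∈ 𝔞` and `w ∈ W`, and suppose `ν := A_w λ`
satisfies `⟨α_i, ν⟩ = 0` and `⟨α_j, ν⟩ > 0` for all `j ≠ i`.  Then `w ∈ {1, s_i}`, and
consequently `ν = A_{s_i} λ = λ - (⟨α_i, λ⟩/2) • α_i^∨`, the orthogonal projection of
`λ` onto the hyperplane `H_{α_i}`. -/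
theorem newton_point_rank_one
    [FiniteDimensional ℝ V] {n : ℕ}
    (Φ : Finset V) (α : Fin n → V) (hα : ∀ j, α j ≠ 0)
    (hΦ0 : (0 : V) ∉ Φ)
    (hαΦ : ∀ j, α j ∈ Φ)
    (hlin : LinearIndependent ℝ α)
    -- `Φ` is stable under the reflection in each of its members
    (hrefl : ∀ β ∈ Φ, ∀ γ ∈ Φ, γ - ⟪β, γ⟫ • coroot β ∈ Φ)
    -- `Φ` is crystallographic: all Cartan integers `⟨β, γ^∨⟩` are integers
    (hcrys : ∀ β ∈ Φ, ∀ γ ∈ Φ, ∃ m : ℤ, ⟪β, coroot γ⟫ = (m : ℝ))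
    -- `Φ` is reduced
    (hred : ∀ β ∈ Φ, ∀ r : ℝ, r • β ∈ Φ → r = 1 ∨ r = -1)
    -- `α` is a system of simple roots: every root is an integral linear combination of
    -- the simple roots with coefficients all of the same sign
    (hsimp : ∀ β ∈ Φ, ∃ c : Fin n → ℤ, ((∀ j, 0 ≤ c j) ∨ (∀ j, c j ≤ 0)) ∧
        β = ∑ j, (c j : ℝ) • α j)
    (i : Fin n) (lam : V) (w : V ≃ₗ[ℝ] V) (hwW : w ∈ weylGroup α hα)
    (m : ℕ) (hm : 1 ≤ m) (hord : orderOf w = m)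
    (hν_wall : ⟪α i, avgProj m w lam⟫ = 0)
    (hν_pos : ∀ j, j ≠ i → 0 < ⟪α j, avgProj m w lam⟫) :
    (w = 1 ∨ w = sRefl (α i) (hα i)) ∧
    avgProj m w lam = avgProj 2 (sRefl (α i) (hα i)) lam ∧
    avgProj m w lam = lam - (⟪α i, lam⟫ / 2) • coroot (α i) :=
  newton_point_rank_one_general Φ α hα hαΦ hlin hrefl hred hsimp i lam w hwW m hord hν_wall hν_pos

end ADLV
end

section
/- Let Φ be a reduced crystallographic root system with simple roots α_1, …, α_n (n ≥ 2), coroot lattice R^∨, coweight lattice Q^∨, and Weyl group W, and fix an index i such that the Cartan integers ⟨α_i, α_1^∨⟩, …, ⟨α_i, α_n^∨⟩ have greatest common divisor 1. Let η ∈ Q^∨ with ⟨α_i, η⟩ = 1, set b := t^η s_i ∈ W̃ and ν := A_{s_i}η. Then the W̃-conjugacy class of b equals the union over u ∈ W of the sets { t^ξ (u s_i u⁻¹) : ξ ∈ (u(ν + ℝα_i^∨)) ∩ (η + R^∨) }. -/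
/-!
Conjugating `t^η s_i` by `t^μ u` gives `t^{u(η + k α_i^∨)} (u s_i u⁻¹)` with
`k = ⟨α_i, u⁻¹μ⟩ ∈ ℤ`, and `ν + ℝα_i^∨ = η + ℝα_i^∨`. Since `W` preserves `Q^∨` and acts
trivially on `Q^∨ / R^∨`, every such translation part lies in `η + R^∨`. Conversely, if
`u(η + r α_i^∨) - η ∈ R^∨`, pulling back by `u⁻¹` gives `r α_i^∨ ∈ R^∨`, so `r ∈ ℤ` by linear
independence of the coroots, and `μ = u(r η)` realises this element because `⟨α_i, η⟩ = 1`.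
-/

open scoped RealInnerProductSpace

namespace ADLV

variable {V : Type*} [NormedAddCommGroup V] [InnerProductSpace ℝ V]

/-- The coroot lattice `R^∨ = ⊕_j ℤ α_j^∨`. -/
noncomputable def corootLattice {n : ℕ} (α : Fin n → V) : AddSubgroup V :=
  AddSubgroup.closure (Set.range fun j => coroot (α j))

/-- The coweight lattice `Q^∨ = {x : ⟨α_j, x⟩ ∈ ℤ for all j}`. -/
def coweightLattice {n : ℕ} (α : Fin n → V) : Set V :=
  {x : V | ∀ j, ∃ m : ℤ, ⟪α j, x⟫ = (m : ℝ)}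

/-- Elements `t^μ u` of the (extended) affine Weyl group `Q^∨ ⋊ W`, realized inside the
semidirect product `V ⋊ GL(V)` with multiplication `(t^μ u)(t^λ v) = t^{μ + uλ}(uv)`. -/
@[ext]
structure Aff (V : Type*) [NormedAddCommGroup V] [InnerProductSpace ℝ V] where
  /-- the translation part -/
  t : V
  /-- the linear part -/
  w : V ≃ₗ[ℝ] V

namespace Aff

instance : Mul (Aff V) := ⟨fun a b => ⟨a.t + a.w b.t, a.w * b.w⟩⟩
instance : One (Aff V) := ⟨⟨0, 1⟩⟩
instance : Inv (Aff V) := ⟨fun a => ⟨-(a.w⁻¹ a.t), a.w⁻¹⟩⟩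

@[simp] lemma mul_t (a b : Aff V) : (a * b).t = a.t + a.w b.t := rfl
@[simp] lemma mul_w (a b : Aff V) : (a * b).w = a.w * b.w := rfl
@[simp] lemma one_t : (1 : Aff V).t = 0 := rfl
@[simp] lemma one_w : (1 : Aff V).w = 1 := rfl
@[simp] lemma inv_t (a : Aff V) : (a⁻¹).t = -(a.w⁻¹ a.t) := rfl
@[simp] lemma inv_w (a : Aff V) : (a⁻¹).w = a.w⁻¹ := rfl

lemma mul_apply_w (f g : V ≃ₗ[ℝ] V) (x : V) : (f * g) x = f (g x) := rfl

instance : Group (Aff V) where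
  mul_assoc a b c := by
    refine Aff.ext ?_ ?_
    · simp [mul_apply_w, map_add, add_assoc]
    · simp [mul_assoc]
  one_mul a := by refine Aff.ext ?_ ?_ <;> simp
  mul_one a := by refine Aff.ext ?_ ?_ <;> simp
  inv_mul_cancel a := by
    refine Aff.ext ?_ ?_
    · simp [mul_apply_w]
    · simp

end Aff


lemma inner_coroot_self (α : V) (hα : α ≠ 0) : ⟪α, coroot α⟫ = 2 := by
  have h : ⟪α, α⟫ ≠ 0 := inner_self_ne_zero.mpr hα
  rw [coroot, real_inner_smul_right]
  field_simp

lemma avgProj_two_sRefl_apply (α : V) (hα : α ≠ 0) (x : V) :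
    avgProj 2 (sRefl α hα) x = x - (⟪α, x⟫ / 2) • coroot α := by
  simp only [avgProj, Finset.sum_range_succ, Finset.sum_range_zero, LinearMap.smul_apply,
    LinearMap.add_apply, LinearEquiv.coe_coe, pow_zero, pow_one, LinearEquiv.coe_one, id_eq,
    LinearMap.zero_apply, Nat.cast_ofNat, sRefl_apply]
  module

lemma exists_eq_avgProj_two_sRefl_add_smul_iff (α : V) (hα : α ≠ 0) (x y : V) :
    (∃ r : ℝ, y = avgProj 2 (sRefl α hα) x + r • coroot α) ↔ ∃ r : ℝ, y = x + r • coroot α := by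
  simp only [avgProj_two_sRefl_apply]
  constructor
  · rintro ⟨r, rfl⟩
    exact ⟨r - ⟪α, x⟫ / 2, by module⟩
  · rintro ⟨r, rfl⟩
    exact ⟨r + ⟪α, x⟫ / 2, by module⟩

lemma Aff.mk_mul_mk_sRefl_mul_mk_inv (μ η α : V) (hα : α ≠ 0) (u : V ≃ₗ[ℝ] V) :
    Aff.mk μ u * Aff.mk η (sRefl α hα) * (Aff.mk μ u)⁻¹
      = Aff.mk (u (η + ⟪α, u⁻¹ μ⟫ • coroot α)) (u * sRefl α hα * u⁻¹) := by
  refine Aff.ext ?_ rfl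
  simp only [Aff.mul_t, Aff.mul_w, Aff.inv_t, LinearEquiv.mul_apply, map_neg,
    sRefl_apply, map_sub, map_add, map_smul, LinearEquiv.coe_inv, LinearEquiv.apply_symm_apply]
  abel

section Lattices

variable {n : ℕ} (α : Fin n → V)

def coweightSubgroup : AddSubgroup V where
  carrier := coweightLattice α
  zero_mem' _ := ⟨0, by simp⟩
  add_mem' {x y} hx hy j := by
    obtain ⟨a, ha⟩ := hx j
    obtain ⟨b, hb⟩ := hy j
    exact ⟨a + b, by rw [inner_add_right, ha, hb]; push_cast; ring⟩
  neg_mem' {x} hx j := by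
    obtain ⟨a, ha⟩ := hx j
    exact ⟨-a, by rw [inner_neg_right, ha]; push_cast; ring⟩

lemma intCast_smul_coroot_mem_corootLattice (c : ℤ) (j : Fin n) :
    (c : ℝ) • coroot (α j) ∈ corootLattice α := by
  rw [Int.cast_smul_eq_zsmul]
  exact zsmul_mem (AddSubgroup.subset_closure (Set.mem_range_self j)) c

variable {α}

lemma corootLattice_le_coweightSubgroup
    (hcart : ∀ k j, ∃ m : ℤ, ⟪α k, coroot (α j)⟫ = (m : ℝ)) :
    corootLattice α ≤ coweightSubgroup α := by
  rw [corootLattice, AddSubgroup.closure_le]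
  rintro _ ⟨j, rfl⟩ k
  exact hcart k j

lemma exists_intCast_eq_of_smul_coroot_mem_corootLattice (hα : ∀ j, α j ≠ 0)
    (hlin : LinearIndependent ℝ α) {i : Fin n} {r : ℝ}
    (h : r • coroot (α i) ∈ corootLattice α) : ∃ m : ℤ, r = m := by
  have hlin' : LinearIndependent ℝ fun j => coroot (α j) :=
    hlin.units_smul fun j => Units.mk0 (2 / ⟪α j, α j⟫)
      (div_ne_zero two_ne_zero (inner_self_ne_zero.mpr (hα j)))
  rw [corootLattice, ← Submodule.span_int_eq_addSubgroupClosure, Submodule.mem_toAddSubgroup,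
    Submodule.mem_span_range_iff_exists_fun] at h
  obtain ⟨m, hm⟩ := h
  refine ⟨m i, ?_⟩
  have := Fintype.linearIndependent_iffₛ.mp hlin' (Pi.single i r) (fun j => m j) ?_ i
  · simpa using this
  · simp [← hm, Int.cast_smul_eq_zsmul]

lemma sRefl_apply_mem_and_sub_mem (hα : ∀ j, α j ≠ 0)
    (hcart : ∀ k j, ∃ m : ℤ, ⟪α k, coroot (α j)⟫ = (m : ℝ)) (j : Fin n) {x : V}
    (hx : x ∈ coweightSubgroup α) :
    sRefl (α j) (hα j) x ∈ coweightSubgroup α ∧ sRefl (α j) (hα j) x - x ∈ corootLattice α := by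
  obtain ⟨m, hm⟩ := hx j
  have hsub : sRefl (α j) (hα j) x - x = -((m : ℝ) • coroot (α j)) := by
    rw [sRefl_apply, hm, sub_sub_cancel_left]
  have hroot := intCast_smul_coroot_mem_corootLattice α m j
  refine ⟨?_, hsub ▸ neg_mem hroot⟩
  rw [← sub_add_cancel (sRefl (α j) (hα j) x) x, hsub]
  exact add_mem (neg_mem (corootLattice_le_coweightSubgroup hcart hroot)) hx

lemma weylGroup_apply_mem_and_sub_mem {hα : ∀ j, α j ≠ 0}
    (hcart : ∀ k j, ∃ m : ℤ, ⟪α k, coroot (α j)⟫ = (m : ℝ)) {w : V ≃ₗ[ℝ] V}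
    (hw : w ∈ weylGroup α hα) {x : V} (hx : x ∈ coweightSubgroup α) :
    w x ∈ coweightSubgroup α ∧ w x - x ∈ corootLattice α := by
  induction hw using Subgroup.closure_induction'' generalizing x with
  | mem _ hs =>
    obtain ⟨j, rfl⟩ := hs
    exact sRefl_apply_mem_and_sub_mem hα hcart j hx
  | inv_mem _ hs =>
    obtain ⟨j, rfl⟩ := hs
    rw [sRefl_inv]
    exact sRefl_apply_mem_and_sub_mem hα hcart j hx
  | one => simpa using hx
  | mul a b _ _ ha hb =>
    obtain ⟨hbx, hbx'⟩ := hb hx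
    obtain ⟨habx, habx'⟩ := ha hbx
    rw [LinearEquiv.mul_apply, ← sub_add_sub_cancel _ (b x)]
    exact ⟨habx, add_mem habx' hbx'⟩

lemma weylGroup_apply_mem_coweightSubgroup {hα : ∀ j, α j ≠ 0}
    (hcart : ∀ k j, ∃ m : ℤ, ⟪α k, coroot (α j)⟫ = (m : ℝ)) {w : V ≃ₗ[ℝ] V}
    (hw : w ∈ weylGroup α hα) {x : V} (hx : x ∈ coweightSubgroup α) :
    w x ∈ coweightSubgroup α :=
  (weylGroup_apply_mem_and_sub_mem hcart hw hx).1

lemma weylGroup_apply_sub_mem_corootLattice {hα : ∀ j, α j ≠ 0}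
    (hcart : ∀ k j, ∃ m : ℤ, ⟪α k, coroot (α j)⟫ = (m : ℝ)) {w : V ≃ₗ[ℝ] V}
    (hw : w ∈ weylGroup α hα) {x : V} (hx : x ∈ coweightSubgroup α) :
    w x - x ∈ corootLattice α :=
  (weylGroup_apply_mem_and_sub_mem hcart hw hx).2

lemma weylGroup_apply_mem_corootLattice {hα : ∀ j, α j ≠ 0}
    (hcart : ∀ k j, ∃ m : ℤ, ⟪α k, coroot (α j)⟫ = (m : ℝ)) {w : V ≃ₗ[ℝ] V}
    (hw : w ∈ weylGroup α hα) {x : V} (hx : x ∈ corootLattice α) :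
    w x ∈ corootLattice α := by
  rw [← sub_add_cancel (w x) x]
  exact add_mem
    (weylGroup_apply_sub_mem_corootLattice hcart hw (corootLattice_le_coweightSubgroup hcart hx)) hx

end Lattices

theorem conjugacy_class_standard_representative_rank_one_general {n : ℕ}
    (α : Fin n → V) (hα : ∀ j, α j ≠ 0)
    (hlin : LinearIndependent ℝ α)
    -- crystallographic: the Cartan integers `⟨α_k, α_j^∨⟩` are integers
    (hcart : ∀ k j, ∃ m : ℤ, ⟪α k, coroot (α j)⟫ = (m : ℝ))
    (i : Fin n)
    (η : V) (hη : η ∈ coweightLattice α) (hηi : ⟪α i, η⟫ = 1) :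
    {z : Aff V | ∃ μ ∈ coweightLattice α, ∃ u ∈ weylGroup α hα,
        z = Aff.mk μ u * Aff.mk η (sRefl (α i) (hα i)) * (Aff.mk μ u)⁻¹}
      = ⋃ u ∈ (weylGroup α hα : Set (V ≃ₗ[ℝ] V)),
          {z : Aff V | ∃ ξ,
            ξ ∈ ⇑u '' {x : V | ∃ r : ℝ,
                  x = avgProj 2 (sRefl (α i) (hα i)) η + r • coroot (α i)} ∧
            ξ - η ∈ corootLattice α ∧
            z = Aff.mk ξ (u * sRefl (α i) (hα i) * u⁻¹)} := by
  change η ∈ coweightSubgroup α at hη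
  ext z
  simp only [Set.mem_ofPred_eq, Set.mem_iUnion, SetLike.mem_coe, exists_prop,
    exists_eq_avgProj_two_sRefl_add_smul_iff, Aff.mk_mul_mk_sRefl_mul_mk_inv]
  constructor
  · rintro ⟨μ, hμ, u, hu, rfl⟩
    obtain ⟨k, hk⟩ := weylGroup_apply_mem_coweightSubgroup hcart (inv_mem hu) hμ i
    refine ⟨u, hu, _, ⟨_, ⟨k, rfl⟩, rfl⟩, ?_, by rw [hk]⟩
    rw [map_add, add_sub_right_comm]
    exact add_mem (weylGroup_apply_sub_mem_corootLattice hcart hu hη)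
      (weylGroup_apply_mem_corootLattice hcart hu (intCast_smul_coroot_mem_corootLattice α k i))
  · rintro ⟨u, hu, _, ⟨_, ⟨r, rfl⟩, rfl⟩, hξ, rfl⟩
    obtain ⟨m, rfl⟩ : ∃ m : ℤ, r = m := by
      refine exists_intCast_eq_of_smul_coroot_mem_corootLattice hα hlin (i := i) ?_
      have hr : r • coroot (α i) = u⁻¹ (u (η + r • coroot (α i)) - η) + (u⁻¹ η - η) := by
        simp
      rw [hr]
      exact add_mem (weylGroup_apply_mem_corootLattice hcart (inv_mem hu) hξ)
        (weylGroup_apply_sub_mem_corootLattice hcart (inv_mem hu) hη)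
    have hmη : (m : ℝ) • η ∈ coweightSubgroup α := by
      rw [Int.cast_smul_eq_zsmul]
      exact zsmul_mem hη m
    refine ⟨u ((m : ℝ) • η), weylGroup_apply_mem_coweightSubgroup hcart hu hmη, u, hu, ?_⟩
    rw [LinearEquiv.coe_inv, LinearEquiv.symm_apply_apply, real_inner_smul_right, hηi, mul_one]

/-- Let `Φ` be a reduced crystallographic root system with simple roots
`α_1, …, α_n` (`n ≥ 2`), coroot lattice `R^∨`, coweight lattice `Q^∨` and Weyl group `W`,
and fix an index `i` such that the Cartan integers `⟨α_i, α_j^∨⟩` have gcd `1`.  Let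
`η ∈ Q^∨` with `⟨α_i, η⟩ = 1`, set `b := t^η s_i ∈ W̃` and `ν := A_{s_i} η`.  Then the
`W̃`-conjugacy class of `b` equals the union over `u ∈ W` of the sets
`{ t^ξ (u s_i u⁻¹) : ξ ∈ (u (ν + ℝα_i^∨)) ∩ (η + R^∨) }`. -/
theorem conjugacy_class_standard_representative_rank_one {n : ℕ} (hn : 2 ≤ n)
    (α : Fin n → V) (hα : ∀ j, α j ≠ 0)
    (hlin : LinearIndependent ℝ α)
    -- crystallographic: the Cartan integers `⟨α_k, α_j^∨⟩` are integers
    (hcart : ∀ k j, ∃ m : ℤ, ⟪α k, coroot (α j)⟫ = (m : ℝ))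
    (i : Fin n) (C : Fin n → ℤ)
    (hC : ∀ j, ⟪α i, coroot (α j)⟫ = (C j : ℝ))
    -- `1` is an integer linear combination of the Cartan integers of the `i`-th row
    (hgcd : ∃ d : Fin n → ℤ, ∑ j, d j * C j = 1)
    (η : V) (hη : η ∈ coweightLattice α) (hηi : ⟪α i, η⟫ = 1) :
    {z : Aff V | ∃ μ ∈ coweightLattice α, ∃ u ∈ weylGroup α hα,
        z = Aff.mk μ u * Aff.mk η (sRefl (α i) (hα i)) * (Aff.mk μ u)⁻¹}
      = ⋃ u ∈ (weylGroup α hα : Set (V ≃ₗ[ℝ] V)),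
          {z : Aff V | ∃ ξ,
            ξ ∈ ⇑u '' {x : V | ∃ r : ℝ,
                  x = avgProj 2 (sRefl (α i) (hα i)) η + r • coroot (α i)} ∧
            ξ - η ∈ corootLattice α ∧
            z = Aff.mk ξ (u * sRefl (α i) (hα i) * u⁻¹)} :=
  conjugacy_class_standard_representative_rank_one_general α hα hlin hcart i η hη hηi

end ADLV
end

section
/- Let Φ be a reduced crystallographic root system with simple roots α_1, …, α_n, coroot lattice R^∨, coweight lattice Q^∨, and Weyl group W, and let w₀ ∈ W satisfy w₀² = I. Let η′ ∈ Q^∨ with ⟨α_i, η′⟩ = 1, and let ζ′ ∈ Q^∨ with ζ′ − η′ ∈ R^∨ and proj_i(w₀ζ′) = proj_i(η′). Then: (1) there exists an integer d′ ∈ ℤ with s_i w₀ ζ′ − η′ = d′·α_i^∨; and (2) for this d′, setting y′ := t^{d′·w₀s_iη′}(w₀s_i) ∈ W̃, one has y′ (t^{η′} s_i) (y′)⁻¹ = t^{ζ′}(w₀ s_i w₀). -/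
/-!
The Weyl group moves coweights by coroots, so `w₀ζ′ - η′ ∈ R^∨`; equal projections to the
hyperplane `H_{α_i}` put it on the line `ℝ α_i^∨`, and linear independence of the coroots makes
its coefficient an integer, which yields `d′`.  For (2), conjugating `t^ν v` by `t^μ u` gives
`t^{μ + uν - (uvu⁻¹)μ} (uvu⁻¹)`; with `u = w₀ s_i`, `v = s_i`, `w₀² = 1` and `s_i η′ = η′ - α_i^∨`
the translation part collapses to `w₀ (η′ - (d′ + 1) α_i^∨) = ζ′`.
-/

open scoped RealInnerProductSpace

namespace ADLV

variable {V : Type*} [NormedAddCommGroup V] [InnerProductSpace ℝ V]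

/-- The orthogonal projection `proj_α : x ↦ x - ½⟨α, x⟩ α^∨` of `V` onto the
hyperplane `H_α = {x : ⟨α, x⟩ = 0}`. -/
noncomputable def projH (α : V) (x : V) : V := x - (⟪α, x⟫ / 2) • coroot α

lemma sRefl_coroot (α : V) (hα : α ≠ 0) : sRefl α hα (coroot α) = -coroot α := by
  rw [sRefl_apply, inner_coroot_self α hα]
  module

lemma sRefl_apply_of_inner_eq_one (α : V) (hα : α ≠ 0) {x : V} (hx : ⟪α, x⟫ = 1) :
    sRefl α hα x = x - coroot α := by
  rw [sRefl_apply, hx, one_smul]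

lemma sRefl_sRefl (α : V) (hα : α ≠ 0) (x : V) : sRefl α hα (sRefl α hα x) = x := by
  rw [sRefl_apply, sRefl_apply, inner_sub_right, real_inner_smul_right, inner_coroot_self α hα]
  module

lemma sub_eq_smul_coroot_of_projH_eq {α x y : V} (h : projH α x = projH α y) :
    x - y = ((⟪α, x⟫ - ⟪α, y⟫) / 2) • coroot α := by
  rw [projH, projH, sub_eq_sub_iff_sub_eq_sub] at h
  rw [h, ← sub_smul, sub_div]

namespace Aff

lemma mk_mul_mk_mul_inv (μ ν : V) (u v : V ≃ₗ[ℝ] V) :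
    mk μ u * mk ν v * (mk μ u)⁻¹ = mk (μ + u ν - (u * v * u⁻¹) μ) (u * v * u⁻¹) := by
  refine Aff.ext ?_ rfl
  simp only [mul_t, mul_w, inv_t, mul_apply_w, map_neg]
  abel

end Aff

section Lattices

variable {n : ℕ} {α : Fin n → V}

lemma sRefl_mem_coweightLattice (hα : ∀ j, α j ≠ 0)
    (hcart : ∀ k j, ∃ m : ℤ, ⟪α k, coroot (α j)⟫ = (m : ℝ)) (j : Fin n) {x : V}
    (hx : x ∈ coweightLattice α) : sRefl (α j) (hα j) x ∈ coweightLattice α := by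
  intro k
  obtain ⟨p, hp⟩ := hx k
  obtain ⟨q, hq⟩ := hx j
  obtain ⟨c, hc⟩ := hcart k j
  refine ⟨p - q * c, ?_⟩
  rw [sRefl_apply, inner_sub_right, real_inner_smul_right, hp, hq, hc]
  push_cast
  ring

lemma sRefl_sub_self_mem_corootLattice (hα : ∀ j, α j ≠ 0) (j : Fin n) {x : V}
    (hx : x ∈ coweightLattice α) : sRefl (α j) (hα j) x - x ∈ corootLattice α := by
  obtain ⟨m, hm⟩ := hx j
  rw [sRefl_apply, hm, sub_sub_cancel_left, Int.cast_smul_eq_zsmul]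
  exact neg_mem <| zsmul_mem (AddSubgroup.subset_closure (Set.mem_range_self j)) m

lemma weylGroup_apply_mem_coweightLattice (hα : ∀ j, α j ≠ 0)
    (hcart : ∀ k j, ∃ m : ℤ, ⟪α k, coroot (α j)⟫ = (m : ℝ))
    {w : V ≃ₗ[ℝ] V} (hw : w ∈ weylGroup α hα) {x : V} (hx : x ∈ coweightLattice α) :
    w x ∈ coweightLattice α := by
  induction hw using Subgroup.closure_induction'' generalizing x with
  | mem _ hs => obtain ⟨j, rfl⟩ := hs; exact sRefl_mem_coweightLattice hα hcart j hx
  | inv_mem _ hs =>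
    obtain ⟨j, rfl⟩ := hs
    rw [sRefl_inv]
    exact sRefl_mem_coweightLattice hα hcart j hx
  | one => exact hx
  | mul _ _ _ _ ha hb => exact ha (hb hx)

lemma weylGroup_apply_sub_self_mem_corootLattice (hα : ∀ j, α j ≠ 0)
    (hcart : ∀ k j, ∃ m : ℤ, ⟪α k, coroot (α j)⟫ = (m : ℝ))
    {w : V ≃ₗ[ℝ] V} (hw : w ∈ weylGroup α hα) {x : V} (hx : x ∈ coweightLattice α) :
    w x - x ∈ corootLattice α := by
  induction hw using Subgroup.closure_induction'' generalizing x with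
  | mem _ hs => obtain ⟨j, rfl⟩ := hs; exact sRefl_sub_self_mem_corootLattice hα j hx
  | inv_mem _ hs =>
    obtain ⟨j, rfl⟩ := hs
    rw [sRefl_inv]
    exact sRefl_sub_self_mem_corootLattice hα j hx
  | one => simp
  | mul a b _ hb hae hbe =>
    have hbx := weylGroup_apply_mem_coweightLattice hα hcart hb hx
    rw [show (a * b) x - x = (a (b x) - b x) + (b x - x) by rw [Aff.mul_apply_w]; abel]
    exact add_mem (hae hbx) (hbe hx)

lemma linearIndependent_coroot (hα : ∀ j, α j ≠ 0) (hlin : LinearIndependent ℝ α) :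
    LinearIndependent ℝ fun j => coroot (α j) := by
  have hscale : ∀ j, (2 / ⟪α j, α j⟫ : ℝ) ≠ 0 := fun j =>
    div_ne_zero two_ne_zero (inner_self_ne_zero.mpr (hα j))
  convert hlin.units_smul fun j => Units.mk0 _ (hscale j)
  rfl

lemma exists_int_eq_of_smul_coroot_mem_corootLattice (hα : ∀ j, α j ≠ 0)
    (hlin : LinearIndependent ℝ α) (i : Fin n) {c : ℝ}
    (hc : c • coroot (α i) ∈ corootLattice α) : ∃ m : ℤ, c = m := by
  classical
  rw [corootLattice, ← Submodule.span_int_eq_addSubgroupClosure,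
    Submodule.mem_toAddSubgroup, Submodule.mem_span_range_iff_exists_fun] at hc
  obtain ⟨g, hg⟩ := hc
  have hcoeff := Fintype.linearIndependent_iffₛ.mp (linearIndependent_coroot hα hlin)
    (Pi.single i c) (fun j => (g j : ℝ))
    (by simp [Pi.single_apply, ite_smul, ← hg, Int.cast_smul_eq_zsmul]) i
  exact ⟨g i, by simpa using hcoeff⟩

end Lattices

theorem conjugation_to_modified_final_alcove_general {n : ℕ}
    (α : Fin n → V) (hα : ∀ j, α j ≠ 0)
    (hlin : LinearIndependent ℝ α)
    -- crystallographic: the Cartan integers `⟨α_k, α_j^∨⟩` are integers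
    (hcart : ∀ k j, ∃ m : ℤ, ⟪α k, coroot (α j)⟫ = (m : ℝ))
    (w₀ : V ≃ₗ[ℝ] V) (hw₀W : w₀ ∈ weylGroup α hα) (hw₀2 : w₀ * w₀ = 1)
    (i : Fin n) (η' ζ' : V)
    (hη'i : ⟪α i, η'⟫ = 1)
    (hζ' : ζ' ∈ coweightLattice α) (hζ'η' : ζ' - η' ∈ corootLattice α)
    (hproj : projH (α i) (w₀ ζ') = projH (α i) η') :
    (∃ d : ℤ, sRefl (α i) (hα i) (w₀ ζ') - η' = (d : ℝ) • coroot (α i)) ∧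
    (∀ d : ℤ, sRefl (α i) (hα i) (w₀ ζ') - η' = (d : ℝ) • coroot (α i) →
      Aff.mk ((d : ℝ) • (w₀ (sRefl (α i) (hα i) η'))) (w₀ * sRefl (α i) (hα i))
          * Aff.mk η' (sRefl (α i) (hα i))
          * (Aff.mk ((d : ℝ) • (w₀ (sRefl (α i) (hα i) η'))) (w₀ * sRefl (α i) (hα i)))⁻¹
        = Aff.mk ζ' (w₀ * sRefl (α i) (hα i) * w₀)) := by
  have hsη' : sRefl (α i) (hα i) η' = η' - coroot (α i) := sRefl_apply_of_inner_eq_one _ _ hη'i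
  refine ⟨?_, fun d hd => ?_⟩
  · have hR : w₀ ζ' - η' ∈ corootLattice α := by
      rw [← sub_add_sub_cancel _ ζ']
      exact add_mem (weylGroup_apply_sub_self_mem_corootLattice hα hcart hw₀W hζ') hζ'η'
    rw [sub_eq_smul_coroot_of_projH_eq hproj] at hR
    obtain ⟨m, hm⟩ := exists_int_eq_of_smul_coroot_mem_corootLattice hα hlin i hR
    have hw₀ζ' : w₀ ζ' = η' + (m : ℝ) • coroot (α i) := by
      rw [← hm, ← sub_eq_smul_coroot_of_projH_eq hproj, add_sub_cancel]
    refine ⟨-(m + 1), ?_⟩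
    rw [hw₀ζ', map_add, map_smul, hsη', sRefl_coroot]
    push_cast
    module
  · have hw₀w₀ : ∀ x, w₀ (w₀ x) = x := fun x => LinearEquiv.congr_fun hw₀2 x
    have hw₀ζ' : w₀ ζ' = η' - ((d : ℝ) + 1) • coroot (α i) := by
      rw [← sRefl_sRefl (α i) (hα i) (w₀ ζ'), sub_eq_iff_eq_add.mp hd, map_add, map_smul,
        hsη', sRefl_coroot]
      module
    have hconj : w₀ * sRefl (α i) (hα i) * sRefl (α i) (hα i) * (w₀ * sRefl (α i) (hα i))⁻¹
        = w₀ * sRefl (α i) (hα i) * w₀ := by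
      rw [mul_inv_rev, inv_eq_of_mul_eq_one_right hw₀2]
      group
    rw [Aff.mk_mul_mk_mul_inv, hconj]
    congr 1
    rw [← hw₀w₀ ζ', hw₀ζ']
    simp only [Aff.mul_apply_w, map_sub, map_smul, hw₀w₀, map_neg, hsη', sRefl_coroot]
    module

/-- Let `w₀ ∈ W` satisfy `w₀² = I`.  Let `η′ ∈ Q^∨` with
`⟨α_i, η′⟩ = 1`, and let `ζ′ ∈ Q^∨` with `ζ′ - η′ ∈ R^∨` and
`proj_i (w₀ ζ′) = proj_i (η′)`.  Then:
(1) there is `d′ ∈ ℤ` with `s_i w₀ ζ′ - η′ = d′ • α_i^∨`; and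
(2) for this `d′`, setting `y′ := t^{d′ • w₀ s_i η′} (w₀ s_i) ∈ W̃`, one has
`y′ (t^{η′} s_i) (y′)⁻¹ = t^{ζ′} (w₀ s_i w₀)`. -/
theorem conjugation_to_modified_final_alcove {n : ℕ}
    (α : Fin n → V) (hα : ∀ j, α j ≠ 0)
    (hlin : LinearIndependent ℝ α)
    -- crystallographic: the Cartan integers `⟨α_k, α_j^∨⟩` are integers
    (hcart : ∀ k j, ∃ m : ℤ, ⟪α k, coroot (α j)⟫ = (m : ℝ))
    (w₀ : V ≃ₗ[ℝ] V) (hw₀W : w₀ ∈ weylGroup α hα) (hw₀2 : w₀ * w₀ = 1)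
    (i : Fin n) (η' ζ' : V)
    (hη' : η' ∈ coweightLattice α) (hη'i : ⟪α i, η'⟫ = 1)
    (hζ' : ζ' ∈ coweightLattice α) (hζ'η' : ζ' - η' ∈ corootLattice α)
    (hproj : projH (α i) (w₀ ζ') = projH (α i) η') :
    (∃ d : ℤ, sRefl (α i) (hα i) (w₀ ζ') - η' = (d : ℝ) • coroot (α i)) ∧
    (∀ d : ℤ, sRefl (α i) (hα i) (w₀ ζ') - η' = (d : ℝ) • coroot (α i) →
      Aff.mk ((d : ℝ) • (w₀ (sRefl (α i) (hα i) η'))) (w₀ * sRefl (α i) (hα i))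
          * Aff.mk η' (sRefl (α i) (hα i))
          * (Aff.mk ((d : ℝ) • (w₀ (sRefl (α i) (hα i) η'))) (w₀ * sRefl (α i) (hα i)))⁻¹
        = Aff.mk ζ' (w₀ * sRefl (α i) (hα i) * w₀)) :=
  conjugation_to_modified_final_alcove_general α hα hlin hcart w₀ hw₀W hw₀2 i η' ζ' hη'i hζ' hζ'η'
    hproj

end ADLV
end
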